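/- Let n be a positive integer and let v be an element of additive order n in the module (ℤ/nℤ)². Then v is part of a basis of the free ℤ/nℤ-module (ℤ/nℤ)²; equivalently, there exists a matrix M in SL(2, ℤ/nℤ) whose first column is v (i.e. M applied to the vector (1,0) equals v). -/
import Mathlib


/-- Any element of additive order `n` in `(ℤ/nℤ)²` is the first column of a matrix in
`SL(2, ℤ/nℤ)`, i.e. is part of a basis of the free `ℤ/nℤ`-module `(ℤ/nℤ)²`. -/
theorem order_n_vector_is_column_of_SL2 (n : ℕ) (hn : 0 < n)
    (v : Fin 2 → ZMod n) (hv : addOrderOf v = n) :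
    ∃ M : Matrix.SpecialLinearGroup (Fin 2) (ZMod n),
      (M : Matrix (Fin 2) (Fin 2) (ZMod n)).mulVec ![1, 0] = v := by
  haveI : NeZero n := ⟨hn.ne'⟩
  set a : ℕ := (v 0).val with ha
  set b : ℕ := (v 1).val with hb
  have hg : Nat.gcd (Nat.gcd a b) n = 1 := by
    by_contra h
    set g := Nat.gcd (Nat.gcd a b) n with hgdef
    have hgdvd : g ∣ n := Nat.gcd_dvd_right _ _
    have hgpos : 0 < g := Nat.pos_of_dvd_of_pos hgdvd hn
    have hg1 : 1 < g := lt_of_le_of_ne hgpos (fun e => h e.symm)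
    set m := n / g with hm
    have hmpos : 0 < m := Nat.div_pos (Nat.le_of_dvd hn hgdvd) hgpos
    have hmlt : m < n := Nat.div_lt_self hn hg1
    have hsmul : m • v = 0 := by
      funext i
      have hdvd : g ∣ (v i).val := by
        fin_cases i
        · exact dvd_trans (Nat.gcd_dvd_left _ _) (Nat.gcd_dvd_left a b)
        · exact dvd_trans (Nat.gcd_dvd_left _ _) (Nat.gcd_dvd_right a b)
      have hndvd : n ∣ m * (v i).val := by
        obtain ⟨k, hk⟩ := hdvd
        refine ⟨k, ?_⟩
        rw [hk, ← mul_assoc, hm, Nat.div_mul_cancel hgdvd]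
      have : ((m * (v i).val : ℕ) : ZMod n) = 0 :=
        (ZMod.natCast_eq_zero_iff _ _).2 hndvd
      calc (m • v) i = (m : ZMod n) * v i := by simp [Pi.smul_apply, nsmul_eq_mul]
        _ = ((m * (v i).val : ℕ) : ZMod n) := by
            push_cast
            rw [ZMod.natCast_val, ZMod.cast_id]
        _ = 0 := this
    have := addOrderOf_dvd_of_nsmul_eq_zero hsmul
    rw [hv] at this
    exact absurd (Nat.le_of_dvd hmpos this) (not_le.2 hmlt)
  -- Bezout over ℤ
  have hcop : IsCoprime (Nat.gcd a b : ℤ) (n : ℤ) := by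
    rw [Int.isCoprime_iff_gcd_eq_one]
    simpa using hg
  obtain ⟨u, z, huz⟩ := hcop
  have hbezout : (Nat.gcd a b : ℤ) = a * Nat.gcdA a b + b * Nat.gcdB a b :=
    Nat.gcd_eq_gcd_ab a b
  -- cast to ZMod n
  have key : ((u * Nat.gcdA a b : ℤ) : ZMod n) * v 0 + ((u * Nat.gcdB a b : ℤ) : ZMod n) * v 1 = 1 := by
    have h1 : ((u * (Nat.gcd a b : ℤ) + z * n : ℤ) : ZMod n) = 1 := by rw [huz]; simp
    rw [hbezout] at h1
    push_cast [ZMod.natCast_self] at h1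
    have h0 : ((a : ℤ) : ZMod n) = v 0 := by
      push_cast
      rw [ha, ZMod.natCast_val, ZMod.cast_id]
    have h1' : ((b : ℤ) : ZMod n) = v 1 := by
      push_cast
      rw [hb, ZMod.natCast_val, ZMod.cast_id]
    rw [← h0, ← h1']
    push_cast
    linear_combination h1
  set c : ZMod n := -((u * Nat.gcdB a b : ℤ) : ZMod n) with hc
  set d : ZMod n := ((u * Nat.gcdA a b : ℤ) : ZMod n) with hd
  refine ⟨⟨!![v 0, c; v 1, d], ?_⟩, ?_⟩
  · rw [Matrix.det_fin_two_of]
    rw [hc, hd]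
    linear_combination key
  · funext i
    fin_cases i <;> simp [Matrix.mulVec, dotProduct, Fin.sum_univ_succ]
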